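/- arXiv:1210.0827 — 3 statements merged into one kernel-verified Lean document; each statement's English description precedes it below -/
import Mathlib

section
/- Let U, V be abelian groups and ∘ : U × V → W a full bimap. Then the adjoint ring of the tensor-product bimap ⊗_{Adj(∘)} : U × V → (U ⊗_ℤ V)/K(Adj(∘)) equals Adj(∘); that is, Adj(⊗_{Adj(∘)}) = Adj(∘). -/
open scoped TensorProduct

namespace TensorBimap

variable {U V W X Y : Type*} [AddCommGroup U] [AddCommGroup V] [AddCommGroup W]
  [AddCommGroup X] [AddCommGroup Y]

/-- A bimap is *full* if its values generate the codomain. -/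
def IsFull (b : U →+ V →+ W) : Prop :=
  AddSubgroup.closure {w : W | ∃ u v, b u v = w} = ⊤

/-- The adjoint set of a bimap. -/
def Adj (b : U →+ V →+ W) : Set (AddMonoid.End U × AddMonoid.End V) :=
  {p | ∀ u v, b (p.1 u) v = b u (p.2 v)}

/-- Composition of a bimap with an additive map on the codomain. -/
def comp₂ (τ : W →+ X) (b : U →+ V →+ W) : U →+ V →+ X where
  toFun u := τ.comp (b u)
  map_zero' := by ext v; simp
  map_add' u u' := by ext v; simp

/-- The canonical bimap into the tensor product over ℤ. -/
noncomputable def tmulHom : U →+ V →+ U ⊗[ℤ] V where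
  toFun u := (TensorProduct.mk ℤ U V u).toAddMonoidHom
  map_zero' := by ext v; simp
  map_add' u u' := by ext v; simp [TensorProduct.add_tmul]

/-- The unique additive map `U ⊗ V →+ W` through which a bimap factors. -/
noncomputable def hat (b : U →+ V →+ W) : U ⊗[ℤ] V →+ W :=
  (TensorProduct.lift (LinearMap.mk₂ ℤ (fun u v => b u v)
      (fun u u' v => by simp)
      (fun c u v => by simp)
      (fun u v v' => by simp)
      (fun c u v => by simp))).toAddMonoidHom

/-- The subgroup `K(S)` of the tensor product. -/
noncomputable def K (S : Set (AddMonoid.End U × AddMonoid.End V)) : AddSubgroup (U ⊗[ℤ] V) :=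
  AddSubgroup.closure {t | ∃ p ∈ S, ∃ u v, t = (p.1 u) ⊗ₜ[ℤ] v - u ⊗ₜ[ℤ] (p.2 v)}

/-- The tensor-product bimap `⊗_S : U × V → (U ⊗ V)/K(S)`. -/
noncomputable def tmulBimap (S : Set (AddMonoid.End U × AddMonoid.End V)) :
    U →+ V →+ (U ⊗[ℤ] V) ⧸ K S :=
  comp₂ (QuotientAddGroup.mk' (K S)) tmulHom

/-- `d` factors through `b`. -/
def FactorsThrough (b : U →+ V →+ X) (d : U →+ V →+ Y) : Prop :=
  ∃ τ : X →+ Y, ∀ u v, d u v = τ (b u v)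

theorem hat_tmul (b : U →+ V →+ W) (u : U) (v : V) : hat b (u ⊗ₜ[ℤ] v) = b u v := by
  simp [hat]

theorem tmulBimap_apply (S : Set (AddMonoid.End U × AddMonoid.End V)) (u : U) (v : V) :
    tmulBimap S u v = QuotientAddGroup.mk (u ⊗ₜ[ℤ] v) :=
  rfl

theorem K_le_ker_hat {S : Set (AddMonoid.End U × AddMonoid.End V)} {b : U →+ V →+ W}
    (hS : S ⊆ Adj b) : K S ≤ (hat b).ker := by
  rw [K, AddSubgroup.closure_le]
  rintro _ ⟨p, hp, u, v, rfl⟩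
  simp [AddMonoidHom.mem_ker, hat_tmul, hS hp u v]

theorem factorsThrough_tmulBimap {S : Set (AddMonoid.End U × AddMonoid.End V)}
    {b : U →+ V →+ W} (hS : S ⊆ Adj b) : FactorsThrough (tmulBimap S) b :=
  ⟨QuotientAddGroup.lift (K S) (hat b) (K_le_ker_hat hS), fun u v => (hat_tmul b u v).symm⟩

theorem adj_subset_of_factorsThrough {b : U →+ V →+ X} {d : U →+ V →+ Y}
    (h : FactorsThrough b d) : Adj b ⊆ Adj d := by
  obtain ⟨τ, hτ⟩ := h
  intro p hp u v
  rw [hτ, hτ, hp u v]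

theorem subset_adj_tmulBimap (S : Set (AddMonoid.End U × AddMonoid.End V)) :
    S ⊆ Adj (tmulBimap S) := fun p hp u v => by
  rw [tmulBimap_apply, tmulBimap_apply, QuotientAddGroup.eq_iff_sub_mem]
  exact AddSubgroup.subset_closure ⟨p, hp, u, v, rfl⟩

theorem statement1_general {U V W : Type*} [AddCommGroup U] [AddCommGroup V] [AddCommGroup W]
    (b : U →+ V →+ W) :
    Adj (tmulBimap (Adj b)) = Adj b :=
  (adj_subset_of_factorsThrough (factorsThrough_tmulBimap le_rfl)).antisymm
    (subset_adj_tmulBimap (Adj b))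

/-- `Adj(⊗_{Adj(∘)}) = Adj(∘)` for a full bimap `∘`. -/
theorem statement1 {U V W : Type*} [AddCommGroup U] [AddCommGroup V] [AddCommGroup W]
    (b : U →+ V →+ W) (hfull : IsFull b) :
    Adj (tmulBimap (Adj b)) = Adj b :=
  statement1_general b

end TensorBimap
end

section
/- Let V be an abelian group, S ⊆ End(V) × End(V), and let ∧_S : V × V → (V ⊗_ℤ V)/L(S) be the exterior tensor-product bimap. If φ ∈ Aut(V) and conjugation by φ maps Adj(∧_S) onto Adj(∧_S) (i.e. {(φxφ⁻¹, φyφ⁻¹) : (x, y) ∈ Adj(∧_S)} = Adj(∧_S)), then the assignment (u ⊗ v) + L(S) ↦ (φu ⊗ φv) + L(S) is well defined and extends to an automorphism ĥ of (V ⊗_ℤ V)/L(S), and (φ; ĥ) is a pseudo-isometry of ∧_S. -/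
/-!
The automorphism `φ ⊗ φ` of `V ⊗ V` carries `L(T)` onto `L(φ T φ⁻¹)` for every set `T` of pairs
of endomorphisms. Moreover `L(Adj(∧_S)) = L(S)`, because `S ⊆ Adj(∧_S)` and a pair lies in
`Adj(∧_S)` exactly when its defining differences lie in `L(S)`. Hence, if conjugation by `φ`
preserves `Adj(∧_S)`, then `φ ⊗ φ` maps `L(S)` onto itself and descends to the quotient.
-/

open scoped TensorProduct

namespace TensorBimap

variable {U V W X Y : Type*} [AddCommGroup U] [AddCommGroup V] [AddCommGroup W]
  [AddCommGroup X] [AddCommGroup Y]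

/-- Conjugation `φ x φ⁻¹` of an endomorphism by an automorphism, maps written on
the left: `u ↦ φ (x (φ⁻¹ u))`. -/
def conjE {U : Type*} [AddCommGroup U] (f : U ≃+ U) (x : AddMonoid.End U) :
    AddMonoid.End U :=
  f.toAddMonoidHom.comp ((x : U →+ U).comp f.symm.toAddMonoidHom)

/-- The subgroup `L(S)` of `V ⊗ V` generated by the squares `v ⊗ v` together
with the elements `xu ⊗ v − u ⊗ yv` for `(x, y) ∈ S`. -/
noncomputable def L {V : Type*} [AddCommGroup V]
    (S : Set (AddMonoid.End V × AddMonoid.End V)) : AddSubgroup (V ⊗[ℤ] V) :=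
  AddSubgroup.closure
    ({t | ∃ v : V, t = v ⊗ₜ[ℤ] v} ∪
     {t | ∃ p ∈ S, ∃ u v : V, t = (p.1 u) ⊗ₜ[ℤ] v - u ⊗ₜ[ℤ] (p.2 v)})

/-- The exterior tensor-product bimap `∧_S : V × V → (V ⊗ V)/L(S)`. -/
noncomputable def wedgeBimap {V : Type*} [AddCommGroup V]
    (S : Set (AddMonoid.End V × AddMonoid.End V)) :
    V →+ V →+ (V ⊗[ℤ] V) ⧸ L S :=
  comp₂ (QuotientAddGroup.mk' (L S)) tmulHom

theorem mem_adj_comp₂_mk'_tmulHom_iff (N : AddSubgroup (U ⊗[ℤ] V))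
    (p : AddMonoid.End U × AddMonoid.End V) :
    p ∈ Adj (comp₂ (QuotientAddGroup.mk' N) tmulHom) ↔
      ∀ u v, p.1 u ⊗ₜ[ℤ] v - u ⊗ₜ[ℤ] p.2 v ∈ N :=
  forall₂_congr fun _ _ => QuotientAddGroup.eq_iff_sub_mem

theorem subset_adj_wedgeBimap (S : Set (AddMonoid.End V × AddMonoid.End V)) :
    S ⊆ Adj (wedgeBimap S) := fun p hp =>
  (mem_adj_comp₂_mk'_tmulHom_iff _ p).2 fun u v =>
    AddSubgroup.subset_closure (Or.inr ⟨p, hp, u, v, rfl⟩)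

theorem L_adj_wedgeBimap (S : Set (AddMonoid.End V × AddMonoid.End V)) :
    L (Adj (wedgeBimap S)) = L S := by
  refine le_antisymm ((AddSubgroup.closure_le _).2 ?_)
    (AddSubgroup.closure_mono (Set.union_subset_union_right _ ?_))
  · rintro _ (⟨v, rfl⟩ | ⟨p, hp, u, v, rfl⟩)
    · exact AddSubgroup.subset_closure (Or.inl ⟨v, rfl⟩)
    · exact (mem_adj_comp₂_mk'_tmulHom_iff _ p).1 hp u v
  · rintro _ ⟨p, hp, u, v, rfl⟩
    exact ⟨p, subset_adj_wedgeBimap S hp, u, v, rfl⟩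

theorem conjE_apply_apply (φ : V ≃+ V) (x : AddMonoid.End V) (u : V) :
    conjE φ x (φ u) = φ (x u) :=
  congrArg (φ ∘ x) (φ.symm_apply_apply u)

theorem map_L_congr (φ : V ≃+ V) (T : Set (AddMonoid.End V × AddMonoid.End V)) :
    (L T).map (TensorProduct.congr φ.toIntLinearEquiv φ.toIntLinearEquiv).toAddMonoidHom =
      L ((fun p => (conjE φ p.1, conjE φ p.2)) '' T) := by
  rw [L, L, AddMonoidHom.map_closure, Set.image_union]
  congr 2
  · apply subset_antisymm
    · rintro _ ⟨_, ⟨v, rfl⟩, rfl⟩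
      exact ⟨φ v, rfl⟩
    · rintro _ ⟨v, rfl⟩
      exact ⟨φ.symm v ⊗ₜ[ℤ] φ.symm v, ⟨_, rfl⟩, by simp⟩
  · apply subset_antisymm
    · rintro _ ⟨_, ⟨p, hp, u, v, rfl⟩, rfl⟩
      refine ⟨_, ⟨p, hp, rfl⟩, φ u, φ v, ?_⟩
      simp [conjE_apply_apply]
    · rintro _ ⟨_, ⟨p, hp, rfl⟩, u, v, rfl⟩
      refine ⟨_, ⟨p, hp, φ.symm u, φ.symm v, rfl⟩, ?_⟩
      simp [← conjE_apply_apply]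

/-- if `φ ∈ Aut(V)` and conjugation by `φ` maps `Adj(∧_S)` onto
itself, then `(u ⊗ v) + L(S) ↦ (φu ⊗ φv) + L(S)` is well defined and extends to
an automorphism `ĥ` of `(V ⊗ V)/L(S)`, and `(φ; ĥ)` is a pseudo-isometry of
`∧_S`. -/
theorem statement11 {V : Type*} [AddCommGroup V]
    (S : Set (AddMonoid.End V × AddMonoid.End V)) (φ : V ≃+ V)
    (hN : (fun p : AddMonoid.End V × AddMonoid.End V =>
            (conjE φ p.1, conjE φ p.2)) '' Adj (wedgeBimap S) = Adj (wedgeBimap S)) :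
    ∃ h : ((V ⊗[ℤ] V) ⧸ L S) ≃+ ((V ⊗[ℤ] V) ⧸ L S),
      ∀ u v, wedgeBimap S (φ u) (φ v) = h (wedgeBimap S u v) := by
  let e := (TensorProduct.congr φ.toIntLinearEquiv φ.toIntLinearEquiv).toAddEquiv
  have hmap : (L S).map (e : V ⊗[ℤ] V →+ V ⊗[ℤ] V) = L S := by
    rw [← L_adj_wedgeBimap]
    exact (map_L_congr φ _).trans (congrArg L hN)
  exact ⟨QuotientAddGroup.congr (L S) (L S) e hmap, fun u v => rfl⟩

end TensorBimap
end

section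
/- Let k be a field, a, b positive integers, and W a k-subspace of M_{a×b}(k). Then the set A of all pairs ( [[α·1_a, Z],[0, β·1_b]], [[α·1_a, 0],[Zᵗ, β·1_b]] ) with α, β ∈ k and Z ∈ W is a unital k-subalgebra of M_{a+b}(k) × M_{a+b}(k)^op, its Jacobson radical is J(A) = { ( [[0, Z],[0, 0]], [[0, 0],[Zᵗ, 0]] ) : Z ∈ W }, and A/J(A) ≅ k × k. -/
/-!
Writing `blockPair α β Z` for the pair `([[α1, Z],[0, β1]], [[α1, 0],[Zᵗ, β1]])`, one has
`blockPair α β Z * blockPair α' β' Z' = blockPair (αα') (ββ') (αZ' + β'Z)`: in the second factor the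
opposite multiplication yields `αZ'ᵗ + β'Zᵗ`, the transpose of the same block. Hence
`(α, β)` is a surjective ring homomorphism `A → k × k` whose kernel `{blockPair 0 0 Z}` squares
to zero. The Jacobson radical of `k × k` vanishes, so the Jacobson radical of `A` lies in the
kernel, and a nil ideal lies in the Jacobson radical.
-/

open MulOpposite Matrix

namespace BlockAlg

variable {k : Type*} [Field k] {a b : ℕ}

/-- The set `A` of pairs `([[α1, Z],[0, β1]], [[α1, 0],[Zᵗ, β1]])` with
`α, β ∈ k` and `Z ∈ W`, inside `M_{a+b}(k) × M_{a+b}(k)ᵒᵖ`. -/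
def Aset (W : Submodule k (Matrix (Fin a) (Fin b) k)) :
    Set (Matrix (Fin a ⊕ Fin b) (Fin a ⊕ Fin b) k ×
      (Matrix (Fin a ⊕ Fin b) (Fin a ⊕ Fin b) k)ᵐᵒᵖ) :=
  {p | ∃ α β : k, ∃ Z ∈ W,
    p.1 = Matrix.fromBlocks (α • 1) Z 0 (β • 1) ∧
    p.2 = op (Matrix.fromBlocks (α • 1) 0 Zᵀ (β • 1))}

/-- The set `{([[0, Z],[0, 0]], [[0, 0],[Zᵗ, 0]]) : Z ∈ W}`. -/
def Jset (W : Submodule k (Matrix (Fin a) (Fin b) k)) :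
    Set (Matrix (Fin a ⊕ Fin b) (Fin a ⊕ Fin b) k ×
      (Matrix (Fin a ⊕ Fin b) (Fin a ⊕ Fin b) k)ᵐᵒᵖ) :=
  {p | ∃ Z ∈ W,
    p.1 = Matrix.fromBlocks 0 Z 0 0 ∧
    p.2 = op (Matrix.fromBlocks 0 0 Zᵀ 0)}

theorem _root_.RingHom.ker_eq_jacobson_of_surjective_of_isNilpotent {R S : Type*} [Ring R]
    [Ring S] (f : R →+* S) (hf : Function.Surjective f) (hS : Ring.jacobson S = ⊥)
    (hnil : ∀ x ∈ RingHom.ker f, IsNilpotent x) : RingHom.ker f = Ring.jacobson R := by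
  apply le_antisymm
  · intro x hx
    rw [← Ideal.jacobson_bot, Ideal.mem_jacobson_iff]
    intro y
    have hyx : y * x ∈ RingHom.ker f := by
      rw [RingHom.mem_ker] at hx ⊢
      rw [map_mul, hx, mul_zero]
    obtain ⟨z, hz⟩ := (hnil _ hyx).isUnit_add_one.exists_left_inv
    refine ⟨z, ?_⟩
    rw [Ideal.mem_bot, ← hz]
    noncomm_ring
  · have : RingHomSurjective f := ⟨hf⟩
    intro x hx
    simpa [hS] using Ring.le_comap_jacobson f hx

def blockPair (α β : k) (Z : Matrix (Fin a) (Fin b) k) :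
    Matrix (Fin a ⊕ Fin b) (Fin a ⊕ Fin b) k × (Matrix (Fin a ⊕ Fin b) (Fin a ⊕ Fin b) k)ᵐᵒᵖ :=
  (fromBlocks (α • 1) Z 0 (β • 1), op (fromBlocks (α • 1) 0 Zᵀ (β • 1)))

theorem mem_Aset {W : Submodule k (Matrix (Fin a) (Fin b) k)} {p} :
    p ∈ Aset W ↔ ∃ α β : k, ∃ Z ∈ W, p = blockPair α β Z := by
  simp only [Aset, blockPair, Set.mem_ofPred_eq, Prod.ext_iff]

theorem Jset_eq_image_blockPair (W : Submodule k (Matrix (Fin a) (Fin b) k)) :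
    Jset W = blockPair 0 0 '' W := by
  ext p
  simp [Jset, blockPair, Prod.ext_iff, eq_comm]

theorem blockPair_add (α β α' β' : k) (Z Z' : Matrix (Fin a) (Fin b) k) :
    blockPair α β Z + blockPair α' β' Z' = blockPair (α + α') (β + β') (Z + Z') := by
  simp [blockPair, fromBlocks_add, add_smul, ← op_add]

theorem blockPair_mul (α β α' β' : k) (Z Z' : Matrix (Fin a) (Fin b) k) :
    blockPair α β Z * blockPair α' β' Z' = blockPair (α * α') (β * β') (α • Z' + β' • Z) := by
  simp only [blockPair, Prod.mk_mul_mk, ← op_mul, fromBlocks_multiply]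
  simp [smul_smul, mul_comm, add_comm]

theorem algebraMap_eq_blockPair (c : k) :
    algebraMap k (Matrix (Fin a ⊕ Fin b) (Fin a ⊕ Fin b) k ×
      (Matrix (Fin a ⊕ Fin b) (Fin a ⊕ Fin b) k)ᵐᵒᵖ) c = blockPair c c 0 := by
  have h : fromBlocks (c • 1) 0 0 (c • 1) = (c • 1 : Matrix (Fin a ⊕ Fin b) (Fin a ⊕ Fin b) k) := by
    rw [← fromBlocks_one, fromBlocks_smul, smul_zero, smul_zero]
  simp [blockPair, Algebra.algebraMap_eq_smul_one, h, Prod.ext_iff]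

theorem blockPair_zero : blockPair (0 : k) 0 (0 : Matrix (Fin a) (Fin b) k) = 0 := by
  rw [← algebraMap_eq_blockPair, map_zero]

theorem blockPair_apply_inl_inl (α β : k) (Z : Matrix (Fin a) (Fin b) k) (i : Fin a) :
    (blockPair α β Z).1 (.inl i) (.inl i) = α := by
  simp [blockPair]

theorem blockPair_apply_inr_inr (α β : k) (Z : Matrix (Fin a) (Fin b) k) (j : Fin b) :
    (blockPair α β Z).1 (.inr j) (.inr j) = β := by
  simp [blockPair]

def blockSubalgebra (W : Submodule k (Matrix (Fin a) (Fin b) k)) :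
    Subalgebra k (Matrix (Fin a ⊕ Fin b) (Fin a ⊕ Fin b) k ×
      (Matrix (Fin a ⊕ Fin b) (Fin a ⊕ Fin b) k)ᵐᵒᵖ) where
  carrier := Aset W
  mul_mem' {p q} hp hq := by
    obtain ⟨α, β, Z, hZ, rfl⟩ := mem_Aset.1 hp
    obtain ⟨α', β', Z', hZ', rfl⟩ := mem_Aset.1 hq
    exact mem_Aset.2 ⟨_, _, _, W.add_mem (W.smul_mem α hZ') (W.smul_mem β' hZ), blockPair_mul ..⟩
  add_mem' {p q} hp hq := by
    obtain ⟨α, β, Z, hZ, rfl⟩ := mem_Aset.1 hp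
    obtain ⟨α', β', Z', hZ', rfl⟩ := mem_Aset.1 hq
    exact mem_Aset.2 ⟨_, _, _, W.add_mem hZ hZ', blockPair_add ..⟩
  algebraMap_mem' c := mem_Aset.2 ⟨c, c, 0, W.zero_mem, algebraMap_eq_blockPair c⟩

section diagonal

variable {W : Submodule k (Matrix (Fin a) (Fin b) k)}

theorem exists_eq_blockPair (x : blockSubalgebra W) :
    ∃ α β : k, ∃ Z ∈ W, (x : _) = blockPair α β Z :=
  mem_Aset.1 x.2

variable (i : Fin a) (j : Fin b) (W)

-- `i` and `j` only witness `0 < a` and `0 < b`: every diagonal entry of a block reads the same scalar.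
def diagonalHom : blockSubalgebra W →+* k × k where
  toFun x := (x.val.1 (.inl i) (.inl i), x.val.1 (.inr j) (.inr j))
  map_one' := by simp [one_apply_eq]
  map_mul' x y := by
    obtain ⟨α, β, Z, -, hx⟩ := exists_eq_blockPair x
    obtain ⟨α', β', Z', -, hy⟩ := exists_eq_blockPair y
    simp only [MulMemClass.coe_mul, hx, hy, blockPair_mul, blockPair_apply_inl_inl,
      blockPair_apply_inr_inr, Prod.mk_mul_mk]
  map_zero' := by simp
  map_add' x y := by
    obtain ⟨α, β, Z, -, hx⟩ := exists_eq_blockPair x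
    obtain ⟨α', β', Z', -, hy⟩ := exists_eq_blockPair y
    simp only [AddMemClass.coe_add, hx, hy, blockPair_add, blockPair_apply_inl_inl,
      blockPair_apply_inr_inr, Prod.mk_add_mk]

variable {W}

theorem diagonalHom_apply {x : blockSubalgebra W} {α β : k} {Z : Matrix (Fin a) (Fin b) k}
    (hx : (x : _) = blockPair α β Z) : diagonalHom W i j x = (α, β) := by
  change (x.val.1 (.inl i) (.inl i), x.val.1 (.inr j) (.inr j)) = (α, β)
  rw [hx, blockPair_apply_inl_inl, blockPair_apply_inr_inr]

theorem diagonalHom_surjective : Function.Surjective (diagonalHom W i j) := by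
  rintro ⟨α, β⟩
  exact ⟨⟨blockPair α β 0, mem_Aset.2 ⟨α, β, 0, W.zero_mem, rfl⟩⟩, diagonalHom_apply i j rfl⟩

theorem mem_ker_diagonalHom_iff {x : blockSubalgebra W} :
    x ∈ RingHom.ker (diagonalHom W i j) ↔ ∃ Z ∈ W, (x : _) = blockPair 0 0 Z := by
  constructor
  · intro h
    obtain ⟨α, β, Z, hZ, hx⟩ := exists_eq_blockPair x
    rw [RingHom.mem_ker, diagonalHom_apply i j hx, Prod.mk_eq_zero] at h
    obtain ⟨rfl, rfl⟩ := h
    exact ⟨Z, hZ, hx⟩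
  · rintro ⟨Z, -, hx⟩
    rw [RingHom.mem_ker, diagonalHom_apply i j hx, Prod.mk_zero_zero]

theorem mul_self_eq_zero_of_mem_ker_diagonalHom {x : blockSubalgebra W}
    (hx : x ∈ RingHom.ker (diagonalHom W i j)) : x * x = 0 := by
  obtain ⟨Z, -, hx⟩ := (mem_ker_diagonalHom_iff i j).1 hx
  ext1
  simp [hx, blockPair_mul, blockPair_zero]

theorem val_image_ker_diagonalHom :
    Subtype.val '' (RingHom.ker (diagonalHom W i j) : Set (blockSubalgebra W)) = Jset W := by
  ext p
  rw [Jset_eq_image_blockPair]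
  constructor
  · rintro ⟨x, hx, rfl⟩
    obtain ⟨Z, hZ, hx⟩ := (mem_ker_diagonalHom_iff i j).1 hx
    exact ⟨Z, hZ, hx.symm⟩
  · rintro ⟨Z, hZ, rfl⟩
    exact ⟨⟨blockPair 0 0 Z, mem_Aset.2 ⟨0, 0, Z, hZ, rfl⟩⟩,
      (mem_ker_diagonalHom_iff i j).2 ⟨Z, hZ, rfl⟩, rfl⟩

end diagonal

/-- the set `A` of pairs
`([[α1, Z],[0, β1]], [[α1, 0],[Zᵗ, β1]])` (`α, β ∈ k`, `Z ∈ W`) is a unital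
`k`-subalgebra of `M_{a+b}(k) × M_{a+b}(k)ᵒᵖ`, its Jacobson radical is
`{([[0, Z],[0, 0]], [[0, 0],[Zᵗ, 0]]) : Z ∈ W}`, and `A/J(A) ≅ k × k`. -/
theorem statement17 {k : Type*} [Field k] {a b : ℕ} (ha : 0 < a) (hb : 0 < b)
    (W : Submodule k (Matrix (Fin a) (Fin b) k)) :
    ∃ B : Subalgebra k (Matrix (Fin a ⊕ Fin b) (Fin a ⊕ Fin b) k ×
        (Matrix (Fin a ⊕ Fin b) (Fin a ⊕ Fin b) k)ᵐᵒᵖ),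
      (B : Set _) = Aset W ∧
      Subtype.val '' ((Ideal.jacobson (⊥ : Ideal B)) : Set B) = Jset W ∧
      ∃ π : B →+* k × k, Function.Surjective π ∧
        RingHom.ker π = Ideal.jacobson (⊥ : Ideal B) := by
  set π := diagonalHom W ⟨0, ha⟩ ⟨0, hb⟩
  have hker : RingHom.ker π = Ideal.jacobson ⊥ := by
    rw [Ideal.jacobson_bot]
    refine π.ker_eq_jacobson_of_surjective_of_isNilpotent (diagonalHom_surjective _ _)
      (IsSemisimpleModule.jacobson_eq_bot _ _) fun x hx ↦ ⟨2, ?_⟩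
    rw [pow_two, mul_self_eq_zero_of_mem_ker_diagonalHom _ _ hx]
  refine ⟨blockSubalgebra W, rfl, ?_, π, diagonalHom_surjective _ _, hker⟩
  rw [← hker, val_image_ker_diagonalHom]

end BlockAlg
end
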